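/- arXiv:1502.03238 — 3 statements merged into one kernel-verified Lean document; each statement's English description precedes it below -/
import Mathlib

section
/- Let (t, n, b) be a pointwise orthonormal frame of smooth vector fields on an open set of ℝ³ with t = n × b. Then the directional derivative of t along itself satisfies ∂ₛt := (t·∇)t = (b·∇×t) n − (n·∇×t) b. -/
open Matrix

noncomputable def pd (i : Fin 3) (f : (Fin 3 → ℝ) → ℝ) (x : Fin 3 → ℝ) : ℝ :=
  fderiv ℝ f x (Pi.single i 1)

noncomputable def grad3 (f : (Fin 3 → ℝ) → ℝ) (x : Fin 3 → ℝ) : Fin 3 → ℝ :=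
  fun i => pd i f x

noncomputable def curl3 (v : (Fin 3 → ℝ) → Fin 3 → ℝ) (x : Fin 3 → ℝ) : Fin 3 → ℝ :=
  ![pd 1 (fun y => v y 2) x - pd 2 (fun y => v y 1) x,
    pd 2 (fun y => v y 0) x - pd 0 (fun y => v y 2) x,
    pd 0 (fun y => v y 1) x - pd 1 (fun y => v y 0) x]

noncomputable def div3 (v : (Fin 3 → ℝ) → Fin 3 → ℝ) (x : Fin 3 → ℝ) : ℝ :=
  pd 0 (fun y => v y 0) x + pd 1 (fun y => v y 1) x + pd 2 (fun y => v y 2) x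

noncomputable def dirDeriv (u v : (Fin 3 → ℝ) → Fin 3 → ℝ) (x : Fin 3 → ℝ) : Fin 3 → ℝ :=
  fun i => u x ⬝ᵥ grad3 (fun y => v y i) x

noncomputable def norm3 (v : Fin 3 → ℝ) : ℝ := Real.sqrt (v ⬝ᵥ v)

/-- `(t,n,b)` is a pointwise right-handed orthonormal frame on `U`. -/
def IsRHFrameOn (t n b : (Fin 3 → ℝ) → Fin 3 → ℝ) (U : Set (Fin 3 → ℝ)) : Prop :=
  ∀ x ∈ U, t x ⬝ᵥ t x = 1 ∧ n x ⬝ᵥ n x = 1 ∧ b x ⬝ᵥ b x = 1 ∧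
    t x ⬝ᵥ n x = 0 ∧ t x ⬝ᵥ b x = 0 ∧ n x ⬝ᵥ b x = 0 ∧
    t x = n x ⨯₃ b x ∧ n x = b x ⨯₃ t x ∧ b x = t x ⨯₃ n x

/-- BAC-CAB: `c × (u × v) = (c·v) u − (c·u) v`. -/
lemma bac_cab (c u v : Fin 3 → ℝ) :
    c ⨯₃ (u ⨯₃ v) = (c ⬝ᵥ v) • u - (c ⬝ᵥ u) • v := by
  funext i
  fin_cases i <;>
    simp [crossProduct, dotProduct, Fin.sum_univ_three] <;> ring

/-- For a right-handed orthonormal frame, (t·∇)t = (b·∇×t) n − (n·∇×t) b. -/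
theorem dirDeriv_tangent_along_itself (U : Set (Fin 3 → ℝ)) (hU : IsOpen U)
    (t n b : (Fin 3 → ℝ) → Fin 3 → ℝ)
    (ht : ContDiffOn ℝ (⊤ : ℕ∞) t U) (hn : ContDiffOn ℝ (⊤ : ℕ∞) n U) (hb : ContDiffOn ℝ (⊤ : ℕ∞) b U)
    (hframe : IsRHFrameOn t n b U) (x : Fin 3 → ℝ) (hx : x ∈ U) :
    dirDeriv t t x = (b x ⬝ᵥ curl3 t x) • n x - (n x ⬝ᵥ curl3 t x) • b x := by
  obtain ⟨-, -, -, -, -, -, htnb, -, -⟩ := hframe x hx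
  have hxU : U ∈ nhds x := hU.mem_nhds hx
  have htd : DifferentiableAt ℝ t x := (ht.contDiffAt hxU).differentiableAt (by simp)
  have hfd : ∀ j : Fin 3, DifferentiableAt ℝ (fun y => t y j) x := differentiableAt_pi.mp htd
  set D : Fin 3 → (Fin 3 → ℝ) →L[ℝ] ℝ := fun j => fderiv ℝ (fun y => t y j) x with hDdef
  have hg : HasFDerivAt (fun y => t y ⬝ᵥ t y)
      (∑ j : Fin 3, (t x j • D j + t x j • D j)) x := by
    have h := HasFDerivAt.fun_sum (fun j (_ : j ∈ Finset.univ) =>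
      ((hfd j).hasFDerivAt.mul (hfd j).hasFDerivAt))
    simpa [dotProduct] using h
  have hzero : fderiv ℝ (fun y => t y ⬝ᵥ t y) x = 0 := by
    have he : (fun y => t y ⬝ᵥ t y) =ᶠ[nhds x] (fun _ => (1:ℝ)) := by
      filter_upwards [hxU] with y hy using (hframe y hy).1
    rw [he.fderiv_eq]
    exact fderiv_const_apply 1
  have hz : ∀ i : Fin 3,
      t x 0 * D 0 (Pi.single i 1) + t x 1 * D 1 (Pi.single i 1)
        + t x 2 * D 2 (Pi.single i 1) = 0 := by
    intro i
    have h1 := hg.fderiv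
    rw [hzero] at h1
    have h2 := DFunLike.congr_fun h1 (Pi.single i 1)
    simp only [ContinuousLinearMap.zero_apply, ContinuousLinearMap.sum_apply,
      ContinuousLinearMap.add_apply, ContinuousLinearMap.smul_apply, smul_eq_mul,
      Fin.sum_univ_three] at h2
    linarith
  have hkey : dirDeriv t t x = curl3 t x ⨯₃ t x := by
    funext i
    have hpd : ∀ (i j : Fin 3), pd i (fun y => t y j) x = D j (Pi.single i 1) := fun _ _ => rfl
    have hz0 := hz 0; have hz1 := hz 1; have hz2 := hz 2
    fin_cases i <;>
      · simp [dirDeriv, grad3, dotProduct, Fin.sum_univ_three, hpd, curl3, cross_apply]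
        linarith [hz0, hz1, hz2]
  rw [hkey, htnb, bac_cab]
  rw [dotProduct_comm (curl3 t x) (b x), dotProduct_comm (curl3 t x) (n x)]
end

section
/- Let (t, n, b) be a pointwise right-handed orthonormal frame of smooth vector fields on an open set of ℝ³, and define the helicities H_t = t·(∇×t), H_n = n·(∇×n), H_b = b·(∇×b) and cross-helicities H_bn = b·(∇×n), H_tn = t·(∇×n), H_bt = b·(∇×t), H_t etc. Then (n·∇)t = H_bn · n + ½(H_t − H_n + H_b) · b. -/
open Matrix

/-! Expand `(n·∇)t` in the orthonormal frame. Differentiating the constant products `t·t`, `n·n`,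
`t·n`, `t·b`, `n·b` gives antisymmetry relations among the numbers `a·(c·∇)d`, and the identity
`(a × c)·(∇ × v) = c·(a·∇)v − a·(c·∇)v`, with `t = n × b`, `n = b × t`, `b = t × n`, expresses
`H_t`, `H_n`, `H_b`, `H_bn` through the same numbers. Solving gives `t·(n·∇)t = 0`,
`n·(n·∇)t = H_bn` and `b·(n·∇)t = ½(H_t − H_n + H_b)`. -/

lemma Matrix.sum_dotProduct_smul_eq_of_orthonormal {R ι : Type*} [CommRing R] [Fintype ι]
    [DecidableEq ι] (e : ι → ι → R) (he : ∀ i j, e i ⬝ᵥ e j = if i = j then 1 else 0)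
    (v : ι → R) : ∑ i, (e i ⬝ᵥ v) • e i = v := by
  have hrows : of e * (of e)ᵀ = 1 := by
    ext i j
    exact he i j
  calc ∑ i, (e i ⬝ᵥ v) • e i = v ᵥ* ((of e)ᵀ * of e) := by
        rw [← vecMul_vecMul, vecMul_transpose, vecMul_eq_sum]
        rfl
    _ = v := by rw [mul_eq_one_comm.mp hrows, vecMul_one]

lemma IsRHFrameOn.dotProduct_smul_add_eq {t n b : (Fin 3 → ℝ) → Fin 3 → ℝ}
    {U : Set (Fin 3 → ℝ)} (h : IsRHFrameOn t n b U) {x : Fin 3 → ℝ} (hx : x ∈ U)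
    (v : Fin 3 → ℝ) : (t x ⬝ᵥ v) • t x + (n x ⬝ᵥ v) • n x + (b x ⬝ᵥ v) • b x = v := by
  obtain ⟨htt, hnn, hbb, htn, htb, hnb, -⟩ := h x hx
  have he : ∀ i j, ![t x, n x, b x] i ⬝ᵥ ![t x, n x, b x] j = if i = j then 1 else 0 := by
    intro i j
    fin_cases i <;> fin_cases j <;> simp [htt, hnn, hbb, htn, htb, hnb, dotProduct_comm (n x),
      dotProduct_comm (b x)]
  simpa [Fin.sum_univ_three] using Matrix.sum_dotProduct_smul_eq_of_orthonormal _ he v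

lemma dotProduct_grad3 (a : Fin 3 → ℝ) (f : (Fin 3 → ℝ) → ℝ) (x : Fin 3 → ℝ) :
    a ⬝ᵥ grad3 f x = fderiv ℝ f x a := by
  conv_rhs => rw [pi_eq_sum_univ' a]
  simp [grad3, pd, dotProduct]

lemma dirDeriv_apply (w v : (Fin 3 → ℝ) → Fin 3 → ℝ) (x : Fin 3 → ℝ) (i : Fin 3) :
    dirDeriv w v x i = fderiv ℝ (fun y => v y i) x (w x) :=
  dotProduct_grad3 _ _ _

lemma cross_dotProduct_curl3 (u w v : (Fin 3 → ℝ) → Fin 3 → ℝ) (x : Fin 3 → ℝ) :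
    (u x ⨯₃ w x) ⬝ᵥ curl3 v x = w x ⬝ᵥ dirDeriv u v x - u x ⬝ᵥ dirDeriv w v x := by
  simp [curl3, dirDeriv, grad3, cross_apply, dotProduct, Fin.sum_univ_three]
  ring

lemma dotProduct_dirDeriv_add_dotProduct_dirDeriv {u v : (Fin 3 → ℝ) → Fin 3 → ℝ}
    {x : Fin 3 → ℝ} (hu : DifferentiableAt ℝ u x) (hv : DifferentiableAt ℝ v x)
    (w : (Fin 3 → ℝ) → Fin 3 → ℝ) :
    u x ⬝ᵥ dirDeriv w v x + v x ⬝ᵥ dirDeriv w u x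
      = fderiv ℝ (fun y => u y ⬝ᵥ v y) x (w x) := by
  have hprod : HasFDerivAt (fun y => u y ⬝ᵥ v y)
      (∑ i, (u x i • fderiv ℝ (fun y => v y i) x + v x i • fderiv ℝ (fun y => u y i) x)) x :=
    HasFDerivAt.fun_sum fun i _ =>
      ((differentiableAt_pi.mp hu i).hasFDerivAt.mul (differentiableAt_pi.mp hv i).hasFDerivAt)
  rw [hprod.fderiv]
  simp [dotProduct, dirDeriv_apply, Finset.sum_add_distrib]

lemma dotProduct_dirDeriv_add_dotProduct_dirDeriv_eq_zero {u v : (Fin 3 → ℝ) → Fin 3 → ℝ}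
    {x : Fin 3 → ℝ} (hu : DifferentiableAt ℝ u x) (hv : DifferentiableAt ℝ v x) {c : ℝ}
    (hc : (fun y => u y ⬝ᵥ v y) =ᶠ[nhds x] fun _ => c) (w : (Fin 3 → ℝ) → Fin 3 → ℝ) :
    u x ⬝ᵥ dirDeriv w v x + v x ⬝ᵥ dirDeriv w u x = 0 := by
  rw [dotProduct_dirDeriv_add_dotProduct_dirDeriv hu hv, hc.fderiv_eq, fderiv_const_apply]
  rfl

/-- (n·∇)t = H_bn n + ½(H_t − H_n + H_b) b, where H_t = t·(∇×t), H_n = n·(∇×n),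
    H_b = b·(∇×b) and H_bn = b·(∇×n). -/
theorem dirDeriv_tangent_along_normal (U : Set (Fin 3 → ℝ)) (hU : IsOpen U)
    (t n b : (Fin 3 → ℝ) → Fin 3 → ℝ)
    (ht : ContDiffOn ℝ 2 t U) (hn : ContDiffOn ℝ 2 n U) (hb : ContDiffOn ℝ 2 b U)
    (hframe : IsRHFrameOn t n b U) (x : Fin 3 → ℝ) (hx : x ∈ U) :
    dirDeriv n t x = (b x ⬝ᵥ curl3 n x) • n x
      + ((1 / 2) * (t x ⬝ᵥ curl3 t x - n x ⬝ᵥ curl3 n x + b x ⬝ᵥ curl3 b x)) • b x := by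
  have hUx : U ∈ nhds x := hU.mem_nhds hx
  have hdt := (ht.contDiffAt hUx).differentiableAt two_ne_zero
  have hdn := (hn.contDiffAt hUx).differentiableAt two_ne_zero
  have hdb := (hb.contDiffAt hUx).differentiableAt two_ne_zero
  have orth {u v : (Fin 3 → ℝ) → Fin 3 → ℝ} (hu : DifferentiableAt ℝ u x)
      (hv : DifferentiableAt ℝ v x) {c : ℝ} (hc : ∀ y ∈ U, u y ⬝ᵥ v y = c) :=
    dotProduct_dirDeriv_add_dotProduct_dirDeriv_eq_zero hu hv (Filter.eventually_of_mem hUx hc)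
  have htt := orth hdt hdt (fun y hy => (hframe y hy).1) n
  have hnn := orth hdn hdn (fun y hy => (hframe y hy).2.1) t
  have htn := orth hdt hdn (fun y hy => (hframe y hy).2.2.2.1)
  have htb := orth hdt hdb (fun y hy => (hframe y hy).2.2.2.2.1) n
  have hnb := orth hdn hdb (fun y hy => (hframe y hy).2.2.2.2.2.1) t
  obtain ⟨-, -, -, -, -, -, htc, hnc, hbc⟩ := hframe x hx
  have hHt := cross_dotProduct_curl3 n b t x
  have hHn := cross_dotProduct_curl3 b t n x
  have hHb := cross_dotProduct_curl3 t n b x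
  have hHbn := cross_dotProduct_curl3 t n n x
  rw [← htc] at hHt
  rw [← hnc] at hHn
  rw [← hbc] at hHb hHbn
  have htD : t x ⬝ᵥ dirDeriv n t x = 0 := by linarith
  have hnD : n x ⬝ᵥ dirDeriv n t x = b x ⬝ᵥ curl3 n x := by linarith [htn n]
  have hbD : b x ⬝ᵥ dirDeriv n t x
      = (1 / 2) * (t x ⬝ᵥ curl3 t x - n x ⬝ᵥ curl3 n x + b x ⬝ᵥ curl3 b x) := by
    linarith [htn b]
  rw [← hframe.dotProduct_smul_add_eq hx (dirDeriv n t x), htD, hnD, hbD, zero_smul, zero_add]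
end

section
/- A smooth vector field J on ℝ³, viewed via the isomorphism J_i = ε_{ijk}Ω^{jk} as a bivector Ω, satisfies the Jacobi identity Ω^{i[j}∂_iΩ^{kl]} = 0 if and only if J·(∇×J) = 0. -/
open Matrix

/-- The Poisson bivector associated to the vector field J via J_i = ε_{ijk} Ω^{jk},
    i.e. Ω^{jk} = ½ ε^{jki} J_i. -/
noncomputable def Om (J : (Fin 3 → ℝ) → Fin 3 → ℝ) (x : Fin 3 → ℝ) :
    Matrix (Fin 3) (Fin 3) ℝ :=
  !![0, J x 2 / 2, -(J x 1) / 2;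
     -(J x 2) / 2, 0, J x 0 / 2;
     J x 1 / 2, -(J x 0) / 2, 0]

/-- The antisymmetrized Jacobi expression Ω^{i[j} ∂_i Ω^{kl]} (cyclic sum over j,k,l,
    which agrees with antisymmetrization for the skew-symmetric Ω). -/
noncomputable def jacobiator (J : (Fin 3 → ℝ) → Fin 3 → ℝ) (j k l : Fin 3)
    (x : Fin 3 → ℝ) : ℝ :=
  ∑ i : Fin 3, (Om J x i j * pd i (fun y => Om J y k l) x
    + Om J x i k * pd i (fun y => Om J y l j) x
    + Om J x i l * pd i (fun y => Om J y j k) x)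


private lemma hd' (J : (Fin 3 → ℝ) → Fin 3 → ℝ) (hJ : ContDiff ℝ (⊤ : ℕ∞) J) (m : Fin 3) :
    Differentiable ℝ (fun y => J y m) :=
  differentiable_pi.mp (hJ.differentiable (by simp)) m

private lemma pd_half' (J : (Fin 3 → ℝ) → Fin 3 → ℝ) (hJ : ContDiff ℝ (⊤ : ℕ∞) J) (i m : Fin 3)
    (x : Fin 3 → ℝ) : pd i (fun y => J y m / 2) x = pd i (fun y => J y m) x / 2 := by
  unfold pd
  rw [show (fun y => J y m / 2) = fun y => (2:ℝ)⁻¹ * J y m by funext y; ring,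
    fderiv_const_mul (hd' J hJ m x)]
  simp; ring

private lemma pd_neghalf' (J : (Fin 3 → ℝ) → Fin 3 → ℝ) (hJ : ContDiff ℝ (⊤ : ℕ∞) J) (i m : Fin 3)
    (x : Fin 3 → ℝ) : pd i (fun y => -(J y m) / 2) x = -(pd i (fun y => J y m) x) / 2 := by
  unfold pd
  rw [show (fun y => -(J y m) / 2) = fun y => (-2⁻¹:ℝ) * J y m by funext y; ring,
    fderiv_const_mul (hd' J hJ m x)]
  simp; ring

private lemma pd_zero' (i : Fin 3) (x : Fin 3 → ℝ) : pd i (fun _ => (0:ℝ)) x = 0 := by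
  simp [pd]

set_option maxHeartbeats 2000000 in
/-- The Jacobi identity for Ω holds iff J·(∇×J) = 0. -/
theorem jacobi_iff_frobenius (J : (Fin 3 → ℝ) → Fin 3 → ℝ) (hJ : ContDiff ℝ (⊤ : ℕ∞) J) :
    (∀ j k l : Fin 3, ∀ x, jacobiator J j k l x = 0) ↔
      (∀ x, J x ⬝ᵥ curl3 J x = 0) := by
  constructor
  · intro h x
    have h012 := h 0 1 2 x
    simp only [jacobiator, Fin.sum_univ_three, Om, Matrix.cons_val_zero, Matrix.cons_val_one,
      Matrix.head_cons, Matrix.cons_val_two, Matrix.tail_cons, Matrix.head_fin_const,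
      Matrix.of_apply, Matrix.cons_val', Matrix.empty_val', Matrix.cons_val_fin_one,
      pd_half' J hJ, pd_neghalf' J hJ, pd_zero'] at h012
    simp only [curl3, dotProduct, Fin.sum_univ_three, Matrix.cons_val_zero, Matrix.cons_val_one,
      Matrix.head_cons, Matrix.cons_val_two, Matrix.tail_cons]
    linear_combination 4 * h012
  · intro h j k l x
    have hx := h x
    have e3 : ∀ m : Fin 3, m = 0 ∨ m = 1 ∨ m = 2 := by decide
    rcases e3 j with rfl | rfl | rfl <;> rcases e3 k with rfl | rfl | rfl <;>
      rcases e3 l with rfl | rfl | rfl <;>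
      simp only [jacobiator, Fin.sum_univ_three, Om, Matrix.cons_val_zero, Matrix.cons_val_one,
        Matrix.head_cons, Matrix.cons_val_two, Matrix.tail_cons, Matrix.head_fin_const,
        Matrix.of_apply, Matrix.cons_val', Matrix.empty_val', Matrix.cons_val_fin_one,
        Fin.isValue, Fin.mk_one, Fin.zero_eta, Fin.mk_zero, curl3, dotProduct,
        pd_half' J hJ, pd_neghalf' J hJ, pd_zero'] at hx ⊢ <;>
      first
        | ring1
        | linear_combination hx / 4
        | linear_combination -hx / 4
end
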